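/- Let g and f be probability mass functions on ℕ with f(x) > 0 for all x, and let α > 0. Then the density power divergence d_α(g,f) = Σ_x [ f(x)^{1+α} − ((1+α)/α) f(x)^α g(x) + (1/α) g(x)^{1+α} ] is nonnegative, and it equals zero if and only if g = f. -/

import Mathlib

open Real

/-! Each summand of the divergence is `(1 + α) / α` times the gap in Young's inequality
`a ^ α * b ≤ a ^ (1 + α) / p + b ^ (1 + α) / q` for the conjugate exponents `p = (1 + α) / α`,
`q = 1 + α`; that gap vanishes exactly when `a ^ (1 + α) = b ^ (1 + α)`, i.e. when `a = b`. -/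

noncomputable def dpdTerm (α a b : ℝ) : ℝ :=
  a ^ (1 + α) - ((1 + α) / α) * a ^ α * b + (1 / α) * b ^ (1 + α)

section DpdTerm

variable {α a b : ℝ}

lemma holderConjugate_one_add_div_self (hα : 0 < α) :
    ((1 + α) / α).HolderConjugate (1 + α) := by
  have h := holderConjugate_one_div (a := α / (1 + α)) (b := 1 / (1 + α))
    (by positivity) (by positivity) (by field_simp; ring)
  simpa only [one_div_div, div_one] using h

lemma dpdTerm_eq_young_gap (hα : 0 < α) (ha : 0 ≤ a) :
    dpdTerm α a b = (1 + α) / α *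
      ((a ^ α) ^ ((1 + α) / α) / ((1 + α) / α) + b ^ (1 + α) / (1 + α) - a ^ α * b) := by
  rw [← rpow_mul ha, mul_div_cancel₀ _ hα.ne', dpdTerm]
  field_simp
  ring

lemma dpdTerm_nonneg (hα : 0 < α) (ha : 0 ≤ a) (hb : 0 ≤ b) : 0 ≤ dpdTerm α a b := by
  rw [dpdTerm_eq_young_gap hα ha]
  exact mul_nonneg (by positivity) <| sub_nonneg.2 <|
    young_inequality_of_nonneg (rpow_nonneg ha α) hb (holderConjugate_one_add_div_self hα)

lemma dpdTerm_eq_zero_iff (hα : 0 < α) (ha : 0 ≤ a) (hb : 0 ≤ b) :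
    dpdTerm α a b = 0 ↔ b = a := by
  rw [dpdTerm_eq_young_gap hα ha, mul_eq_zero, or_iff_right (by positivity), sub_eq_zero,
    eq_comm, young_inequality_eq_iff_of_nonneg (rpow_nonneg ha α) hb
      (holderConjugate_one_add_div_self hα), ← rpow_mul ha,
    mul_div_cancel₀ _ hα.ne', rpow_left_inj ha hb (by positivity), eq_comm]

end DpdTerm

theorem dpd_nonneg_eq_zero_iff_general (g f : ℕ → ℝ) (α : ℝ) (hα : 0 < α)
    (hg0 : ∀ x, 0 ≤ g x) (hf0 : ∀ x, 0 < f x)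
    (hsum : Summable fun x =>
      f x ^ (1 + α) - ((1 + α) / α) * f x ^ α * g x + (1 / α) * g x ^ (1 + α)) :
    0 ≤ ∑' x, (f x ^ (1 + α) - ((1 + α) / α) * f x ^ α * g x + (1 / α) * g x ^ (1 + α)) ∧
      ((∑' x, (f x ^ (1 + α) - ((1 + α) / α) * f x ^ α * g x + (1 / α) * g x ^ (1 + α))) = 0
        ↔ g = f) := by
  change Summable (fun x => dpdTerm α (f x) (g x)) at hsum
  change 0 ≤ ∑' x, dpdTerm α (f x) (g x) ∧ (∑' x, dpdTerm α (f x) (g x) = 0 ↔ g = f)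
  have hterm x : 0 ≤ dpdTerm α (f x) (g x) := dpdTerm_nonneg hα (hf0 x).le (hg0 x)
  refine ⟨tsum_nonneg hterm, ?_⟩
  rw [← hsum.hasSum_iff, hasSum_zero_iff_of_nonneg hterm, funext_iff, funext_iff]
  exact forall_congr' fun x => dpdTerm_eq_zero_iff hα (hf0 x).le (hg0 x)

theorem dpd_nonneg_eq_zero_iff (g f : ℕ → ℝ) (α : ℝ) (hα : 0 < α)
    (hg0 : ∀ x, 0 ≤ g x) (hf0 : ∀ x, 0 < f x)
    (hg1 : ∑' x, g x = 1) (hf1 : ∑' x, f x = 1)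
    (hsum : Summable fun x =>
      f x ^ (1 + α) - ((1 + α) / α) * f x ^ α * g x + (1 / α) * g x ^ (1 + α)) :
    0 ≤ ∑' x, (f x ^ (1 + α) - ((1 + α) / α) * f x ^ α * g x + (1 / α) * g x ^ (1 + α)) ∧
      ((∑' x, (f x ^ (1 + α) - ((1 + α) / α) * f x ^ α * g x + (1 / α) * g x ^ (1 + α))) = 0
        ↔ g = f) :=
  dpd_nonneg_eq_zero_iff_general g f α hα hg0 hf0 hsum
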